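/- Let l > 0, let M < N be natural numbers, p = ⌊M/2⌋, q = ⌊N/2⌋. For all m ∈ {0,...,p} and n ∈ {p+1,...,q}, the (2m, 2n) entry of the matrix V^{[M,N,l]} = (T^{[M,M,l]})^{-1} T^{[M,N,l]} equals ( (-1)^{p-m} l^{2(n-m)} (2n)! ) / ( 2^{n-m} (n-m)! (p-m)! (2m)! ) · ∏_{r=n-p}^{n-m-1} r · ∏_{r=p+m+1}^{p+n} 1/(2r+1). -/

import Mathlib

open Polynomial

/-- The `m`-th Legendre polynomial, via Rodrigues' formula. -/
noncomputable def legendre (m : ℕ) : Polynomial ℝ :=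
  ((1 : ℝ) / (2 ^ m * m.factorial)) • (Polynomial.derivative^[m] ((X ^ 2 - 1) ^ m))

/-- The rescaled normalized Legendre function `e_{m,l}(x) = √(2m+1) L_m(x/l)`. -/
noncomputable def eFun (m : ℕ) (l : ℝ) (x : ℝ) : ℝ :=
  Real.sqrt (2 * m + 1) * (legendre m).eval (x / l)

/-- The `(M+1) × (N+1)` projection matrix `T^{[M,N,l]}`. -/
noncomputable def Tmat (M N : ℕ) (l : ℝ) : Matrix (Fin (M + 1)) (Fin (N + 1)) ℝ :=
  fun m n => (1 / (2 * l)) * ∫ x in (-l)..l, x ^ (n : ℕ) * eFun (m : ℕ) l x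

/-- The matrix `V^{[M,N,l]} = (T^{[M,M,l]})⁻¹ T^{[M,N,l]}` of the degree-reduction map
in the canonical basis. -/
noncomputable def Vmat (M N : ℕ) (l : ℝ) : Matrix (Fin (M + 1)) (Fin (N + 1)) ℝ :=
  (Tmat M M l)⁻¹ * Tmat M N l

/-!
Since `T_{k,n} = ⟨x ^ n, e_{k,l}⟩` and the `e_{k,l}` are orthonormal for the normalized measure on
`[-l, l]`, the inverse of `T^{[M,M,l]}` is the matrix of monomial coefficients of the `e_{k,l}`, so
`V_{a,b} = ∑_{k ≤ M} (2k+1)/2 · l^(b-a) · ∫_{-1}^{1} x^b L_k · [X^a] L_k`.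
Rodrigues' formula and repeated integration by parts turn the moments `∫ x^(k+2d) L_k` into the
integrals `∫ x^(2a) (x²-1)^m`, which obey a two-term recurrence; the coefficients of `L_k` come
from the binomial expansion of `(x²-1)^k`. For `a = 2m`, `b = 2n` only `k = 2j` with
`m ≤ j ≤ ⌊M/2⌋` contribute, and the partial sums of the resulting hypergeometric series have a
closed form, proved by induction on the upper limit; writing its factorial quotients as the two
products gives the formula.
-/

open scoped Nat

noncomputable def polyIntegral : ℝ[X] →ₗ[ℝ] ℝ where
  toFun p := ∫ x in (-1 : ℝ)..1, p.eval x
  map_add' p q := by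
    simpa using intervalIntegral.integral_add (p.continuous.intervalIntegrable (-1) 1)
      (q.continuous.intervalIntegrable (-1) 1)
  map_smul' c p := by simp [intervalIntegral.integral_const_mul]

theorem polyIntegral_apply (p : ℝ[X]) : polyIntegral p = ∫ x in (-1 : ℝ)..1, p.eval x := rfl

theorem polyIntegral_C_mul (c : ℝ) (p : ℝ[X]) :
    polyIntegral (C c * p) = c * polyIntegral p := by
  rw [← smul_eq_C_mul, map_smul, smul_eq_mul]

theorem polyIntegral_mul_derivative (p q : ℝ[X]) :
    polyIntegral (p * derivative q) =
      p.eval 1 * q.eval 1 - p.eval (-1) * q.eval (-1) - polyIntegral (derivative p * q) := by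
  simpa only [polyIntegral_apply, eval_mul] using
    intervalIntegral.integral_mul_deriv_eq_deriv_mul (fun x _ => p.hasDerivAt x)
      (fun x _ => q.hasDerivAt x) (p.derivative.continuous.intervalIntegrable _ _)
      (q.derivative.continuous.intervalIntegrable _ _)

theorem pow_sub_dvd_iterate_derivative_pow {R : Type*} [CommRing R] (q : R[X]) {m j : ℕ}
    (h : j ≤ m) : q ^ (m - j) ∣ derivative^[j] (q ^ m) := by
  induction j with
  | zero => simp
  | succ j ih =>
    obtain ⟨g, hg⟩ := ih (by omega)
    rw [Function.iterate_succ_apply', hg, show m - j = m - (j + 1) + 1 by omega, derivative_mul,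
      derivative_pow]
    exact dvd_add (dvd_mul_of_dvd_left (dvd_mul_of_dvd_left (dvd_mul_left _ _) _) _)
      (dvd_mul_of_dvd_left (pow_dvd_pow _ (by omega)) _)

theorem eval_iterate_derivative_pow_eq_zero {R : Type*} [CommRing R] {q : R[X]} {x : R}
    (hx : q.IsRoot x) {m j : ℕ} (h : j < m) : (derivative^[j] (q ^ m)).eval x = 0 := by
  obtain ⟨g, hg⟩ := pow_sub_dvd_iterate_derivative_pow q h.le
  rw [hg, eval_mul, eval_pow, hx.eq_zero, zero_pow (by omega), zero_mul]

theorem polyIntegral_mul_iterate_derivative_pow {q : ℝ[X]} (hone : q.IsRoot 1)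
    (hneg : q.IsRoot (-1)) {m k : ℕ} (hk : k ≤ m) (p : ℝ[X]) :
    polyIntegral (p * derivative^[k] (q ^ m)) =
      (-1) ^ k * polyIntegral (derivative^[k] p * q ^ m) := by
  induction k generalizing p with
  | zero => simp
  | succ k ih =>
    rw [Function.iterate_succ_apply', polyIntegral_mul_derivative,
      eval_iterate_derivative_pow_eq_zero hone (by omega),
      eval_iterate_derivative_pow_eq_zero hneg (by omega), ih (by omega),
      ← Function.iterate_succ_apply]
    ring

theorem polyIntegral_mul_legendre (m : ℕ) (p : ℝ[X]) :
    polyIntegral (p * legendre m) =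
      (-1) ^ m / (2 ^ m * m !) * polyIntegral (derivative^[m] p * (X ^ 2 - 1) ^ m) := by
  rw [legendre, mul_smul_comm, map_smul, smul_eq_mul,
    polyIntegral_mul_iterate_derivative_pow (by simp) (by simp) le_rfl]
  ring

theorem polyIntegral_X_pow_two_mul (a : ℕ) :
    polyIntegral (X ^ (2 * a)) = 2 / (2 * a + 1) := by
  rw [polyIntegral_apply]
  simp only [eval_pow, eval_X]
  rw [integral_pow, (even_two_mul a).add_one.neg_one_pow]
  push_cast
  ring

theorem polyIntegral_X_pow_mul_sq_sub_one_pow_succ (a m : ℕ) :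
    (2 * a + 2 * m + 3) * polyIntegral (X ^ (2 * a) * (X ^ 2 - 1) ^ (m + 1)) =
      -(2 * m + 2) * polyIntegral (X ^ (2 * a) * (X ^ 2 - 1) ^ m) := by
  have hparts := polyIntegral_mul_derivative ((X ^ 2 - 1 : ℝ[X]) ^ (m + 1)) (X ^ (2 * a + 1))
  have hleft : (X ^ 2 - 1 : ℝ[X]) ^ (m + 1) * derivative (X ^ (2 * a + 1)) =
      C (2 * a + 1 : ℝ) * (X ^ (2 * a) * (X ^ 2 - 1) ^ (m + 1)) := by
    rw [derivative_X_pow]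
    simp only [map_add, map_mul, map_natCast, map_ofNat, map_one]
    push_cast
    ring
  have hright : derivative ((X ^ 2 - 1 : ℝ[X]) ^ (m + 1)) * X ^ (2 * a + 1) =
      C (2 * m + 2 : ℝ) *
        (X ^ (2 * a) * (X ^ 2 - 1) ^ (m + 1) + X ^ (2 * a) * (X ^ 2 - 1) ^ m) := by
    rw [derivative_pow]
    simp only [map_add, map_mul, map_natCast, map_ofNat, derivative_sub, derivative_X_pow,
      derivative_one]
    push_cast
    ring
  rw [hleft, hright, polyIntegral_C_mul, polyIntegral_C_mul, map_add] at hparts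
  norm_num at hparts
  linear_combination hparts

theorem polyIntegral_X_pow_mul_sq_sub_one_pow (a m : ℕ) :
    polyIntegral (X ^ (2 * a) * (X ^ 2 - 1) ^ m) =
      (-1) ^ m * 2 ^ (2 * m + 1) * m ! * (a + m)! * (2 * a)! /
        ((2 * a + 2 * m + 1)! * a !) := by
  induction m with
  | zero =>
    rw [pow_zero, mul_one, polyIntegral_X_pow_two_mul]
    simp only [add_zero, mul_zero, Nat.factorial_succ]
    push_cast
    field_simp
    ring
  | succ m ih =>
    have hrec := polyIntegral_X_pow_mul_sq_sub_one_pow_succ a m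
    rw [ih] at hrec
    apply mul_left_cancel₀ (by positivity : (2 * a + 2 * m + 3 : ℝ) ≠ 0)
    rw [hrec, ← add_assoc, show 2 * a + 2 * (m + 1) + 1 = 2 * a + 2 * m + 1 + 1 + 1 by ring]
    simp only [Nat.factorial_succ]
    push_cast
    field_simp
    ring

theorem polyIntegral_X_pow_mul_legendre_of_lt {k t : ℕ} (h : t < k) :
    polyIntegral (X ^ t * legendre k) = 0 := by
  rw [polyIntegral_mul_legendre, iterate_derivative_eq_zero (by simpa using h), zero_mul,
    map_zero, mul_zero]

theorem cast_add_descFactorial {K : Type*} [Field K] [CharZero K] (n k : ℕ) :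
    ((n + k).descFactorial k : K) = (n + k)! / n ! := by
  rw [eq_div_iff (Nat.cast_ne_zero.mpr n.factorial_ne_zero), mul_comm]
  exact_mod_cast by rw [Nat.add_descFactorial_eq_ascFactorial, Nat.factorial_mul_ascFactorial]

theorem polyIntegral_X_pow_add_two_mul_mul_legendre (k d : ℕ) :
    polyIntegral (X ^ (k + 2 * d) * legendre k) =
      2 ^ (k + 1) * (k + 2 * d)! * (k + d)! /
        (d ! * (2 * k + 2 * d + 1)!) := by
  rw [add_comm k (2 * d), polyIntegral_mul_legendre, iterate_derivative_X_pow_eq_C_mul,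
    Nat.add_sub_cancel, mul_assoc, polyIntegral_C_mul, polyIntegral_X_pow_mul_sq_sub_one_pow,
    cast_add_descFactorial, add_comm d k, show 2 * d + 2 * k + 1 = 2 * k + 2 * d + 1 by ring]
  field_simp
  rw [← pow_mul, pow_mul', neg_one_sq, one_pow]
  ring

theorem coeff_sq_sub_one_pow (m s : ℕ) :
    ((X ^ 2 - 1 : ℝ[X]) ^ m).coeff s =
      if 2 ∣ s then (-1) ^ (m - s / 2) * (m.choose (s / 2) : ℝ) else 0 := by
  have hexpand : (X ^ 2 - 1 : ℝ[X]) ^ m = expand ℝ 2 ((X + C (-1)) ^ m) := by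
    simp [sub_eq_add_neg]
  rw [hexpand, coeff_expand two_pos, coeff_X_add_C_pow]

theorem legendre_coeff (k t : ℕ) :
    (legendre k).coeff t =
      (t + k).descFactorial k * ((X ^ 2 - 1 : ℝ[X]) ^ k).coeff (t + k) / (2 ^ k * k !) := by
  rw [legendre, coeff_smul, coeff_iterate_derivative, smul_eq_mul, nsmul_eq_mul]
  ring

theorem legendre_coeff_eq_zero_of_lt {k t : ℕ} (h : k < t) : (legendre k).coeff t = 0 := by
  rw [legendre_coeff, coeff_sq_sub_one_pow]
  split_ifs
  · rw [Nat.choose_eq_zero_of_lt (by omega)]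
    simp
  · simp

theorem legendre_coeff_eq_zero_of_odd {k t : ℕ} (h : Odd (t + k)) : (legendre k).coeff t = 0 := by
  rw [legendre_coeff, coeff_sq_sub_one_pow, if_neg (by simpa [← even_iff_two_dvd] using h)]
  simp

theorem legendre_coeff_of_add_two_mul (t d : ℕ) :
    (legendre (t + 2 * d)).coeff t =
      (-1) ^ d * (2 * t + 2 * d)! /
        (2 ^ (t + 2 * d) * t ! * (t + d)! * d !) := by
  rw [legendre_coeff, cast_add_descFactorial, coeff_sq_sub_one_pow,
    show t + (t + 2 * d) = 2 * (t + d) by ring, if_pos (dvd_mul_right 2 _),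
    Nat.mul_div_cancel_left _ two_pos, Nat.cast_choose ℝ (by omega),
    show t + 2 * d - (t + d) = d by omega, show 2 * (t + d) = 2 * t + 2 * d by ring]
  field_simp

theorem natDegree_legendre_le (k : ℕ) : (legendre k).natDegree ≤ k :=
  natDegree_le_iff_coeff_eq_zero.mpr fun _ h => legendre_coeff_eq_zero_of_lt h

theorem polyIntegral_mul_eq_sum_coeff (p q : ℝ[X]) {n : ℕ} (hq : q.natDegree < n) :
    polyIntegral (q * p) = ∑ j ∈ Finset.range n, q.coeff j * polyIntegral (X ^ j * p) := by
  conv_lhs => rw [q.as_sum_range' n hq, Finset.sum_mul, map_sum]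
  refine Finset.sum_congr rfl fun j _ => ?_
  rw [← C_mul_X_pow_eq_monomial, mul_assoc, polyIntegral_C_mul]

theorem polyIntegral_legendre_mul_legendre_of_lt {k m : ℕ} (h : k < m) :
    polyIntegral (legendre k * legendre m) = 0 := by
  rw [polyIntegral_mul_eq_sum_coeff _ _ (Nat.lt_succ_of_le (natDegree_legendre_le k))]
  refine Finset.sum_eq_zero fun j hj => ?_
  rw [polyIntegral_X_pow_mul_legendre_of_lt (by rw [Finset.mem_range] at hj; omega), mul_zero]

theorem polyIntegral_legendre_mul_self (k : ℕ) :
    polyIntegral (legendre k * legendre k) = 2 / (2 * k + 1) := by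
  rw [polyIntegral_mul_eq_sum_coeff _ _ (Nat.lt_succ_of_le (natDegree_legendre_le k)),
    Finset.sum_range_succ, Finset.sum_eq_zero fun j hj => by
      rw [polyIntegral_X_pow_mul_legendre_of_lt (Finset.mem_range.mp hj), mul_zero], zero_add]
  have hcoeff := legendre_coeff_of_add_two_mul k 0
  have hmoment := polyIntegral_X_pow_add_two_mul_mul_legendre k 0
  simp only [mul_zero, add_zero, pow_zero, Nat.factorial_zero, Nat.cast_one, mul_one,
    one_mul] at hcoeff hmoment
  rw [hcoeff, hmoment, Nat.factorial_succ]
  push_cast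
  field_simp
  ring

theorem polyIntegral_legendre_mul_legendre (k m : ℕ) :
    polyIntegral (legendre k * legendre m) = if k = m then (2 : ℝ) / (2 * m + 1) else 0 := by
  rcases lt_trichotomy k m with h | rfl | h
  · rw [polyIntegral_legendre_mul_legendre_of_lt h, if_neg h.ne]
  · rw [polyIntegral_legendre_mul_self, if_pos rfl]
  · rw [mul_comm, polyIntegral_legendre_mul_legendre_of_lt h, if_neg h.ne']

theorem integral_pow_mul_eFun {l : ℝ} (hl : l ≠ 0) (j k : ℕ) :
    ∫ x in (-l)..l, x ^ j * eFun k l x =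
      l ^ (j + 1) * √(2 * k + 1) * polyIntegral (X ^ j * legendre k) := by
  have hsubst := intervalIntegral.integral_comp_mul_left (fun x => x ^ j * eFun k l x) hl
    (a := -1) (b := 1)
  simp only [mul_neg, mul_one, smul_eq_mul, eFun, mul_div_cancel_left₀ _ hl] at hsubst
  rw [eq_inv_mul_iff_mul_eq₀ hl] at hsubst
  simp only [eFun]
  rw [← hsubst, polyIntegral_apply, ← intervalIntegral.integral_const_mul,
    ← intervalIntegral.integral_const_mul]
  refine intervalIntegral.integral_congr fun x _ => ?_
  simp only [eval_mul, eval_pow, eval_X]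
  ring

theorem Tmat_apply {l : ℝ} (hl : l ≠ 0) (M N : ℕ) (m : Fin (M + 1)) (n : Fin (N + 1)) :
    Tmat M N l m n =
      √(2 * m + 1) * l ^ (n : ℕ) * polyIntegral (X ^ (n : ℕ) * legendre m) / 2 := by
  rw [Tmat, integral_pow_mul_eFun hl, pow_succ]
  field_simp

/-- Column `k` holds the monomial coefficients of `e_{k,l}`. -/
noncomputable def legendreCoeffMat (M : ℕ) (l : ℝ) : Matrix (Fin (M + 1)) (Fin (M + 1)) ℝ :=
  fun j k => √(2 * k + 1) * (legendre k).coeff j / l ^ (j : ℕ)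

theorem Tmat_mul_legendreCoeffMat {l : ℝ} (hl : l ≠ 0) (M : ℕ) :
    Tmat M M l * legendreCoeffMat M l = 1 := by
  ext m k
  have hterm : ∀ j : Fin (M + 1), Tmat M M l m j * legendreCoeffMat M l j k =
      √(2 * m + 1) * √(2 * k + 1) / 2 *
        ((legendre k).coeff j * polyIntegral (X ^ (j : ℕ) * legendre m)) := by
    intro j
    rw [Tmat_apply hl, legendreCoeffMat]
    field_simp
  rw [Matrix.mul_apply, Matrix.one_apply, Finset.sum_congr rfl fun j _ => hterm j,
    ← Finset.mul_sum,
    Fin.sum_univ_eq_sum_range (fun j => (legendre k).coeff j * polyIntegral (X ^ j * legendre m)),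
    ← polyIntegral_mul_eq_sum_coeff _ _ ((natDegree_legendre_le k).trans_lt k.isLt),
    polyIntegral_legendre_mul_legendre]
  by_cases h : m = k
  · subst h
    rw [if_pos rfl, if_pos rfl, Real.mul_self_sqrt (by positivity)]
    field_simp
  · rw [if_neg (fun h' => h (Fin.ext h'.symm)), if_neg h, mul_zero]

theorem Vmat_apply {l : ℝ} (hl : l ≠ 0) (M N : ℕ) (a : Fin (M + 1)) (b : Fin (N + 1)) :
    Vmat M N l a b = ∑ k ∈ Finset.range (M + 1),
      (2 * k + 1) / 2 * (l ^ (b : ℕ) / l ^ (a : ℕ)) *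
        polyIntegral (X ^ (b : ℕ) * legendre k) * (legendre k).coeff a := by
  rw [Vmat, Matrix.inv_eq_right_inv (Tmat_mul_legendreCoeffMat hl M), Matrix.mul_apply,
    ← Fin.sum_univ_eq_sum_range]
  refine Finset.sum_congr rfl fun k _ => ?_
  rw [legendreCoeffMat, Tmat_apply hl]
  have hsq : √(2 * (k : ℕ) + 1 : ℝ) * √(2 * (k : ℕ) + 1) = 2 * k + 1 :=
    Real.mul_self_sqrt (by positivity)
  field_simp
  linear_combination (polyIntegral (X ^ (b : ℕ) * legendre k) * (legendre k).coeff a) * hsq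

theorem sum_range_mul_legendre_coeff_two_mul (f : ℕ → ℝ) (M m : ℕ) :
    ∑ k ∈ Finset.range (M + 1), f k * (legendre k).coeff (2 * m) =
      ∑ j ∈ Finset.Icc m (M / 2), f (2 * j) * (legendre (2 * j)).coeff (2 * m) := by
  rw [← Finset.sum_image (f := fun k => f k * (legendre k).coeff (2 * m)) (g := (2 * ·))
    fun _ _ _ _ h => by simpa using h]
  refine (Finset.sum_subset (fun k hk => ?_) fun k hk hk' => ?_).symm
  · simp only [Finset.mem_image, Finset.mem_Icc, Finset.mem_range] at hk ⊢
    omega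
  · simp only [Finset.mem_image, Finset.mem_Icc, Finset.mem_range, not_exists, not_and] at hk hk'
    rcases Nat.even_or_odd k with ⟨j, rfl⟩ | hodd
    · rw [legendre_coeff_eq_zero_of_lt (by have := hk' j; omega), mul_zero]
    · rw [legendre_coeff_eq_zero_of_odd ((even_two_mul m).add_odd hodd), mul_zero]

/-- The contribution of `k = 2 * j` to `Vmat M N l (2 * m) (2 * n)`, divided by
`l ^ (2 * (n - m)) * (2 * n)! / (2 * m)!`. -/
noncomputable def evenTerm (m n j : ℕ) : ℝ :=
  (4 * j + 1) * (-1) ^ (j - m) * (2 * j + 2 * m)! * (n + j)! /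
    ((j + m)! * (j - m)! * (n - j)! * (2 * n + 2 * j + 1)!)

theorem projection_summand_eq {l : ℝ} (hl : l ≠ 0) {m n j : ℕ} (hmj : m ≤ j) (hjn : j < n) :
    (2 * ((2 * j : ℕ) : ℝ) + 1) / 2 * (l ^ (2 * n) / l ^ (2 * m)) *
        polyIntegral (X ^ (2 * n) * legendre (2 * j)) * (legendre (2 * j)).coeff (2 * m) =
      l ^ (2 * (n - m)) * (2 * n)! / (2 * m)! * evenTerm m n j := by
  have hmoment := polyIntegral_X_pow_add_two_mul_mul_legendre (2 * j) (n - j)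
  rw [show 2 * j + 2 * (n - j) = 2 * n by omega, show 2 * j + (n - j) = n + j by omega,
    show 2 * (2 * j) + 2 * (n - j) + 1 = 2 * n + 2 * j + 1 by omega] at hmoment
  have hcoeff := legendre_coeff_of_add_two_mul (2 * m) (j - m)
  rw [show 2 * m + 2 * (j - m) = 2 * j by omega, show 2 * m + (j - m) = j + m by omega,
    show 2 * (2 * m) + 2 * (j - m) = 2 * j + 2 * m by omega] at hcoeff
  have hpow : l ^ (2 * n) / l ^ (2 * m) = l ^ (2 * (n - m)) := by
    rw [div_eq_mul_inv, ← pow_sub₀ _ hl (by omega)]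
    congr 1
    omega
  rw [hmoment, hcoeff, hpow, evenTerm]
  push_cast
  field_simp
  ring

theorem prod_Icc_natCast_eq_div {a b : ℕ} (h : a ≤ b) :
    ∏ r ∈ Finset.Icc (a + 1) b, (r : ℝ) = b ! / a ! := by
  induction b, h using Nat.le_induction with
  | base => rw [Finset.Icc_eq_empty (by omega), Finset.prod_empty, div_self (by positivity)]
  | succ b hab ih =>
    rw [Finset.prod_Icc_succ_top (by omega), ih, Nat.factorial_succ]
    push_cast
    field_simp

theorem prod_Icc_inv_two_mul_add_one {c b : ℕ} (h : c ≤ b) :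
    ∏ r ∈ Finset.Icc (c + 1) b, (1 : ℝ) / (2 * r + 1) =
      (2 * c + 1)! * 2 ^ b * b ! / ((2 * b + 1)! * 2 ^ c * c !) := by
  induction b, h using Nat.le_induction with
  | base => rw [Finset.Icc_eq_empty (by omega), Finset.prod_empty, div_self (by positivity)]
  | succ b hcb ih =>
    rw [Finset.prod_Icc_succ_top (by omega), ih, show 2 * (b + 1) + 1 = 2 * b + 1 + 1 + 1 by ring]
    simp only [Nat.factorial_succ]
    push_cast
    field_simp
    ring

/-- The induction step of `sum_Icc_evenTerm` for `p = m + a` and `n = m + a + b + 2`, with every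
factorial argument written as `base + constant` so that `Nat.factorial_succ` reduces it. -/
theorem evenTerm_partial_sum_succ (m a b : ℕ) :
    (-1 : ℝ) ^ a * (a + b + 1)! * (4 * m + 2 * a + 1)! * (2 * m + 2 * a + b + 2)! /
        ((a + b + 2)! * a ! * (b + 1)! * (2 * m + a)! * (4 * m + 4 * a + 2 * b + 5)!) +
      (4 * m + 4 * a + 5) * (-1) ^ (a + 1) * (4 * m + 2 * a + 2)! * (2 * m + 2 * a + b + 3)! /
        ((2 * m + a + 1)! * (a + 1)! * (b + 1)! * (4 * m + 4 * a + 2 * b + 7)!) =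
    (-1) ^ (a + 1) * (a + b + 1)! * (4 * m + 2 * a + 3)! * (2 * m + 2 * a + b + 3)! /
        ((a + b + 2)! * (a + 1)! * b ! * (2 * m + a + 1)! * (4 * m + 4 * a + 2 * b + 7)!) := by
  simp only [Nat.factorial_succ]
  push_cast
  field_simp
  ring

theorem sum_Icc_evenTerm {m n p : ℕ} (hmp : m ≤ p) (hpn : p < n) :
    ∑ j ∈ Finset.Icc m p, evenTerm m n j =
      (-1) ^ (p - m) * (n - m - 1)! * (2 * p + 2 * m + 1)! * (p + n)! /
        ((n - m)! * (p - m)! * (n - p - 1)! * (p + m)! * (2 * p + 2 * n + 1)!) := by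
  induction p, hmp using Nat.le_induction with
  | base =>
    obtain ⟨b, rfl⟩ : ∃ b, n = m + b + 1 := ⟨n - m - 1, by omega⟩
    rw [Finset.Icc_self, Finset.sum_singleton, evenTerm, Nat.sub_self,
      show m + b + 1 - m - 1 = b by omega, show m + b + 1 - m = b + 1 by omega]
    simp only [Nat.factorial_succ]
    push_cast
    field_simp
    ring_nf
  | succ p hmp ih =>
    obtain ⟨a, rfl⟩ : ∃ a, p = m + a := ⟨p - m, by omega⟩
    obtain ⟨b, rfl⟩ : ∃ b, n = m + a + b + 2 := ⟨n - (m + a) - 2, by omega⟩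
    have hstep := evenTerm_partial_sum_succ m a b
    rw [Finset.sum_Icc_succ_top (by omega), ih (by omega), evenTerm,
      show m + a - m = a by omega, show m + a + 1 - m = a + 1 by omega,
      show m + a + b + 2 - m - 1 = a + b + 1 by omega, show m + a + b + 2 - m = a + b + 2 by omega,
      show m + a + b + 2 - (m + a) - 1 = b + 1 by omega,
      show m + a + b + 2 - (m + a + 1) - 1 = b by omega,
      show m + a + b + 2 - (m + a + 1) = b + 1 by omega]
    push_cast at hstep ⊢
    ring_nf at hstep ⊢
    exact hstep

theorem Vmat_even_even_entry (l : ℝ) (hl : 0 < l) (M N : ℕ)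
    (m n : ℕ) (hm : m ≤ M / 2) (hn1 : M / 2 + 1 ≤ n) (hn2 : n ≤ N / 2) :
    Vmat M N l ⟨2 * m, by omega⟩ ⟨2 * n, by omega⟩ =
      ((-1 : ℝ) ^ (M / 2 - m) * l ^ (2 * (n - m)) * ((2 * n).factorial : ℝ))
          / (2 ^ (n - m) * ((n - m).factorial : ℝ) * ((M / 2 - m).factorial : ℝ)
              * ((2 * m).factorial : ℝ))
        * (∏ r ∈ Finset.Icc (n - M / 2) (n - m - 1), (r : ℝ))
        * (∏ r ∈ Finset.Icc (M / 2 + m + 1) (M / 2 + n), (1 : ℝ) / (2 * r + 1)) := by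
  set p := M / 2
  rw [Vmat_apply hl.ne', Fin.val_mk, Fin.val_mk, sum_range_mul_legendre_coeff_two_mul,
    Finset.sum_congr rfl fun j hj => projection_summand_eq hl.ne' (Finset.mem_Icc.mp hj).1
      (by have := (Finset.mem_Icc.mp hj).2; omega),
    show n - p = n - p - 1 + 1 by omega, ← Finset.mul_sum, sum_Icc_evenTerm hm (by omega),
    prod_Icc_natCast_eq_div (by omega), prod_Icc_inv_two_mul_add_one (by omega),
    show 2 ^ (p + n) = (2 : ℝ) ^ (n - m) * 2 ^ (p + m) by rw [← pow_add]; congr 1; omega,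
    show 2 * (p + m) + 1 = 2 * p + 2 * m + 1 by ring,
    show 2 * (p + n) + 1 = 2 * p + 2 * n + 1 by ring]
  field_simp
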